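/- Let χ and θ be differential functions of (q,s) satisfying identically, on the region of jet space where K¹ ≠ 0 and K² ≠ 0, the determining equations for generalized symmetries of the system (K): 𝒟_y𝒟_z χ = χ and s_1(𝒟_z − 1)²χ + K¹ 𝒟_y θ = (K¹/K²) s_1 (𝒟_y + 𝒟_z − 2)χ + K² 𝒟_z θ. Then χ does not depend on any of the jet variables s_κ: ∂χ/∂s_κ = 0 identically for all κ ∈ ℕ₀. -/

import Mathlib

/- STATEMENT 11 (Lemma 5 of the paper): for a generalized symmetry (χ, θ) of
the system (K), the component χ does not depend on the jet variables s_κ. -/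

noncomputable section

namespace KG

/-- The jet space for the system (K): coordinates y, z, q_ι (ι ∈ ℤ) and
s_κ (κ ∈ ℕ). Here `p.2.2.1 ι` represents ∂^ι q/∂y^ι for ι ≥ 0 and
∂^{−ι} q/∂z^{−ι} for ι < 0, and `p.2.2.2 κ` represents ∂^κ s/∂y^κ. -/
abbrev KJet : Type := ℝ × ℝ × (ℤ → ℝ) × (ℕ → ℝ)

/-- Directional (Gateaux) derivative of a function on the jet space. -/
def gd (f : KJet → ℝ) (p v : KJet) : ℝ := deriv (fun s : ℝ => f (p + s • v)) 0

/-- K¹ := q_{−2} − 2q_{−1} + q_0. -/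
def K1 (p : KJet) : ℝ := p.2.2.1 (-2) - 2 * p.2.2.1 (-1) + p.2.2.1 0

/-- K² := q_1 + q_{−1} − 2q_0. -/
def K2 (p : KJet) : ℝ := p.2.2.1 1 + p.2.2.1 (-1) - 2 * p.2.2.1 0

/-- The restricted total derivative operator
𝒟_y = ∂_y + Σ_ι q_{ι+1} ∂_{q_ι} + Σ_κ s_{κ+1} ∂_{s_κ}. -/
def Dy (f : KJet → ℝ) (p : KJet) : ℝ :=
  gd f p (1, 0, fun ι => p.2.2.1 (ι + 1), fun κ => p.2.2.2 (κ + 1))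

/-- The restricted total derivative operator
𝒟_z = ∂_z + Σ_ι q_{ι−1} ∂_{q_ι} + Σ_κ 𝒟_y^κ((K¹/K²)s_1) ∂_{s_κ}. -/
def Dz (f : KJet → ℝ) (p : KJet) : ℝ :=
  gd f p (0, 1, fun ι => p.2.2.1 (ι - 1),
    fun κ => Dy^[κ] (fun q => K1 q / K2 q * q.2.2.2 1) p)

/-- The region of the jet space where K¹ ≠ 0 and K² ≠ 0. -/
def Reg (p : KJet) : Prop := K1 p ≠ 0 ∧ K2 p ≠ 0

/-- `f` is a smooth differential function of (q,s): it depends smoothly on y, z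
and finitely many of the jet variables q_ι (−N ≤ ι ≤ N) and s_κ (κ < M). -/
def IsDiffFunQS (f : KJet → ℝ) : Prop :=
  ∃ (N M : ℕ) (F : ℝ × ℝ × (Fin (2 * N + 1) → ℝ) × (Fin M → ℝ) → ℝ),
    ContDiff ℝ (⊤ : ℕ∞) F ∧
    ∀ p : KJet, f p =
      F (p.1, p.2.1, fun j => p.2.2.1 ((j.1 : ℤ) - (N : ℤ)), fun k => p.2.2.2 k.1)

/-! ### Auxiliary development -/

/-- The s-coordinate direction. -/
def sdir (j : ℕ) : KJet := (0, 0, 0, Pi.single j (1 : ℝ))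

/-- The direction field of `Dy`. -/
def vy (p : KJet) : KJet := (1, 0, fun ι => p.2.2.1 (ι + 1), fun κ => p.2.2.2 (κ + 1))

/-- The function `(K¹/K²) s₁` and its `Dy`-iterates. -/
def W (κ : ℕ) (p : KJet) : ℝ := Dy^[κ] (fun q => K1 q / K2 q * q.2.2.2 1) p

/-- The direction field of `Dz`. -/
def vz (p : KJet) : KJet := (0, 1, fun ι => p.2.2.1 (ι - 1), fun κ => W κ p)

lemma Dy_eq (f : KJet → ℝ) (p : KJet) : Dy f p = gd f p (vy p) := rfl

lemma Dz_eq (f : KJet → ℝ) (p : KJet) : Dz f p = gd f p (vz p) := rfl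

/-- The "shift" linear operator on directions appearing when commuting ∂/∂s with Dy. -/
def Ly (v : KJet) : KJet := (0, 0, fun ι => v.2.2.1 (ι + 1), fun κ => v.2.2.2 (κ + 1))

lemma vy_line (p v : KJet) (t : ℝ) : vy (p + t • v) = vy p + t • Ly v := by
  simp only [vy, Ly, Prod.mk_add_mk, Prod.smul_mk, Prod.mk.injEq]
  refine ⟨by norm_num, by norm_num, rfl, rfl⟩

lemma Ly_sdir_succ (j : ℕ) : Ly (sdir (j + 1)) = sdir j := by
  simp only [Ly, sdir]
  refine Prod.ext rfl (Prod.ext rfl (Prod.ext rfl ?_))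
  funext κ
  simp [Pi.single_apply]

lemma K1_line_sdir (p : KJet) (t : ℝ) (v : KJet) (hv : v.2.2.1 = 0) :
    K1 (p + t • v) = K1 p := by
  have h : ∀ ι : ℤ, (p + t • v).2.2.1 ι = p.2.2.1 ι := by
    intro ι
    show p.2.2.1 ι + t * v.2.2.1 ι = p.2.2.1 ι
    rw [hv]; simp
  simp only [K1, h]

lemma K2_line_sdir (p : KJet) (t : ℝ) (v : KJet) (hv : v.2.2.1 = 0) :
    K2 (p + t • v) = K2 p := by
  have h : ∀ ι : ℤ, (p + t • v).2.2.1 ι = p.2.2.1 ι := by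
    intro ι
    show p.2.2.1 ι + t * v.2.2.1 ι = p.2.2.1 ι
    rw [hv]; simp
  simp only [K2, h]

lemma Reg_line_sdir (p : KJet) (t : ℝ) (j : ℕ) : Reg (p + t • sdir j) ↔ Reg p := by
  unfold Reg
  rw [K1_line_sdir p t _ rfl, K2_line_sdir p t _ rfl]

lemma continuous_K1 : Continuous K1 := by
  unfold K1; fun_prop

lemma continuous_K2 : Continuous K2 := by
  unfold K2; fun_prop

lemma isOpen_Reg : IsOpen {p : KJet | Reg p} := by
  have : {p : KJet | Reg p} = K1 ⁻¹' {(0:ℝ)}ᶜ ∩ K2 ⁻¹' {(0:ℝ)}ᶜ := by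
    ext p; simp [Reg]
  rw [this]
  exact (isOpen_compl_singleton.preimage continuous_K1).inter
    (isOpen_compl_singleton.preimage continuous_K2)

lemma eventually_Reg_line (p : KJet) (hp : Reg p) (v : KJet) :
    ∀ᶠ t : ℝ in nhds 0, Reg (p + t • v) := by
  have hc : Continuous fun t : ℝ => p + t • v := by
    exact continuous_const.add (continuous_id.smul continuous_const)
  have := hc.continuousAt (x := 0) (isOpen_Reg.mem_nhds (by simpa using hp))
  exact this

/-- `Dy` of a function vanishing on `Reg` vanishes on `Reg`. -/
lemma Dy_zero_on (g : KJet → ℝ) (hg : ∀ q, Reg q → g q = 0) (p : KJet) (hp : Reg p) :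
    Dy g p = 0 := by
  rw [Dy_eq, gd]
  have h : (fun t : ℝ => g (p + t • vy p)) =ᶠ[nhds 0] fun _ => (0:ℝ) := by
    filter_upwards [eventually_Reg_line p hp (vy p)] with t ht using hg _ ht
  rw [h.deriv_eq, deriv_const]

lemma Dz_zero_on (g : KJet → ℝ) (hg : ∀ q, Reg q → g q = 0) (p : KJet) (hp : Reg p) :
    Dz g p = 0 := by
  rw [Dz_eq, gd]
  have h : (fun t : ℝ => g (p + t • vz p)) =ᶠ[nhds 0] fun _ => (0:ℝ) := by
    filter_upwards [eventually_Reg_line p hp (vz p)] with t ht using hg _ ht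
  rw [h.deriv_eq, deriv_const]

lemma gd_congr_on (g1 g2 : KJet → ℝ) (h : ∀ q, Reg q → g1 q = g2 q) (p : KJet)
    (hp : Reg p) (j : ℕ) : gd g1 p (sdir j) = gd g2 p (sdir j) := by
  unfold gd
  congr 1
  funext t
  exact h _ ((Reg_line_sdir p t j).2 hp)

/-! ### Finite-dimensional windows -/

/-- Finite-dimensional model space. -/
abbrev VS (N M : ℕ) : Type := ℝ × ℝ × (Fin (2 * N + 1) → ℝ) × (Fin M → ℝ)

/-- Window projection. -/
def win (N M : ℕ) (p : KJet) : VS N M :=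
  (p.1, p.2.1, fun j => p.2.2.1 ((j.1 : ℤ) - (N : ℤ)), fun k => p.2.2.2 k.1)

/-- Extension by zero. -/
def emb (N M : ℕ) (x : VS N M) : KJet :=
  (x.1, x.2.1,
    fun ι => if h : (ι + N).toNat < 2 * N + 1 ∧ -(N:ℤ) ≤ ι then x.2.2.1 ⟨(ι + N).toNat, h.1⟩ else 0,
    fun κ => if h : κ < M then x.2.2.2 ⟨κ, h⟩ else 0)

lemma win_line (N M : ℕ) (p v : KJet) (t : ℝ) :
    win N M (p + t • v) = win N M p + t • win N M v := rfl

lemma emb_win_q (N M : ℕ) (p : KJet) (ι : ℤ) (h1 : -(N:ℤ) ≤ ι) (h2 : ι ≤ N) :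
    (emb N M (win N M p)).2.2.1 ι = p.2.2.1 ι := by
  have ht : ((ι + N).toNat : ℤ) = ι + N := Int.toNat_of_nonneg (by omega)
  have hc : (ι + N).toNat < 2 * N + 1 ∧ -(N:ℤ) ≤ ι := ⟨by omega, h1⟩
  show dite _ _ _ = _
  rw [dif_pos hc]
  show p.2.2.1 ((((ι + N).toNat : ℕ) : ℤ) - (N:ℤ)) = p.2.2.1 ι
  have he : (((ι + N).toNat : ℕ) : ℤ) - (N:ℤ) = ι := by omega
  rw [he]

lemma emb_win_s (N M : ℕ) (p : KJet) (κ : ℕ) (h : κ < M) :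
    (emb N M (win N M p)).2.2.2 κ = p.2.2.2 κ := by
  show dite _ _ _ = _
  rw [dif_pos h]
  rfl

lemma win_congr (N M : ℕ) (p p' : KJet) (hy : p.1 = p'.1) (hz : p.2.1 = p'.2.1)
    (hq : ∀ ι : ℤ, -(N:ℤ) ≤ ι → ι ≤ N → p.2.2.1 ι = p'.2.2.1 ι)
    (hs : ∀ κ : ℕ, κ < M → p.2.2.2 κ = p'.2.2.2 κ) : win N M p = win N M p' := by
  unfold win
  rw [hy, hz]
  refine Prod.ext rfl (Prod.ext rfl (Prod.ext ?_ ?_))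
  · funext j
    have hj := j.2
    exact hq _ (by omega) (by omega)
  · funext k
    exact hs _ k.2

lemma Reg_emb_win (N M : ℕ) (hN : 2 ≤ N) (p : KJet) :
    Reg (emb N M (win N M p)) ↔ Reg p := by
  unfold Reg K1 K2
  rw [emb_win_q N M p (-2) (by omega) (by omega), emb_win_q N M p (-1) (by omega) (by omega),
    emb_win_q N M p 0 (by omega) (by omega), emb_win_q N M p 1 (by omega) (by omega)]

/-- The good region in the model space. -/
def RegV (N M : ℕ) : Set (VS N M) := {x | Reg (emb N M x)}

lemma continuous_emb (N M : ℕ) : Continuous (emb N M) := by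
  unfold emb
  refine continuous_fst.prodMk (Continuous.prodMk (continuous_fst.comp continuous_snd) (Continuous.prodMk ?_ ?_))
  · refine continuous_pi fun ι => ?_
    by_cases h : (ι + N).toNat < 2 * N + 1 ∧ -(N:ℤ) ≤ ι
    · simp only [dif_pos h]
      exact (continuous_apply _).comp (by fun_prop)
    · simp only [dif_neg h]
      exact continuous_const
  · refine continuous_pi fun κ => ?_
    by_cases h : κ < M
    · simp only [dif_pos h]
      exact (continuous_apply _).comp (by fun_prop)
    · simp only [dif_neg h]
      exact continuous_const

lemma isOpen_RegV (N M : ℕ) : IsOpen (RegV N M) :=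
  isOpen_Reg.preimage (continuous_emb N M)

lemma win_mem_RegV (N M : ℕ) (hN : 2 ≤ N) (p : KJet) (hp : Reg p) :
    win N M p ∈ RegV N M := by
  show Reg (emb N M (win N M p))
  exact (Reg_emb_win N M hN p).2 hp

/-- Admissible representation by a finite-dimensional function, smooth on the good region. -/
def AdmRep (f : KJet → ℝ) (N M : ℕ) (F : VS N M → ℝ) : Prop :=
  2 ≤ N ∧ 1 ≤ M ∧ ContDiffOn ℝ (⊤ : ℕ∞) F (RegV N M) ∧ ∀ p, f p = F (win N M p)

lemma AdmRep.gd_eq_deriv {f : KJet → ℝ} {N M : ℕ} {F : VS N M → ℝ}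
    (h : AdmRep f N M F) (p v : KJet) :
    gd f p v = deriv (fun t : ℝ => F (win N M p + t • win N M v)) 0 := by
  unfold gd
  congr 1
  funext t
  rw [h.2.2.2, win_line]

lemma line_hasDerivAt {E : Type*} [NormedAddCommGroup E] [NormedSpace ℝ E]
    (a b : E) (t : ℝ) : HasDerivAt (fun u : ℝ => a + u • b) b t := by
  have h := ((hasDerivAt_id t).smul_const b).const_add a
  simpa using h

lemma AdmRep.diffAt {f : KJet → ℝ} {N M : ℕ} {F : VS N M → ℝ}
    (h : AdmRep f N M F) {x : VS N M} (hx : x ∈ RegV N M) :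
    ContDiffAt ℝ (⊤ : ℕ∞) F x :=
  h.2.2.1.contDiffAt ((isOpen_RegV N M).mem_nhds hx)

lemma AdmRep.gd_eq {f : KJet → ℝ} {N M : ℕ} {F : VS N M → ℝ}
    (h : AdmRep f N M F) {p : KJet} (hp : Reg p) (v : KJet) :
    gd f p v = fderiv ℝ F (win N M p) (win N M v) := by
  rw [h.gd_eq_deriv p v]
  have hd : DifferentiableAt ℝ F (win N M p) :=
    (h.diffAt (win_mem_RegV N M h.1 p hp)).differentiableAt (by simp)
  have hline := line_hasDerivAt (win N M p) (win N M v) 0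
  have hF : HasFDerivAt F (fderiv ℝ F (win N M p)) (win N M p + (0:ℝ) • win N M v) := by
    simpa using hd.hasFDerivAt
  exact (hF.comp_hasDerivAt 0 hline).deriv

lemma win_sdir_out (N M : ℕ) (j : ℕ) (hj : M ≤ j) : win N M (sdir j) = 0 := by
  unfold win sdir
  refine Prod.ext rfl (Prod.ext rfl (Prod.ext rfl ?_))
  funext k
  have hk : (k.1 : ℕ) ≠ j := by have := k.2; omega
  simp [win, sdir, Pi.single_apply, hk]

lemma AdmRep.gd_out {f : KJet → ℝ} {N M : ℕ} {F : VS N M → ℝ}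
    (h : AdmRep f N M F) (p : KJet) (j : ℕ) (hj : M ≤ j) : gd f p (sdir j) = 0 := by
  rw [h.gd_eq_deriv p (sdir j), win_sdir_out N M j hj]
  have : (fun t : ℝ => F (win N M p + t • (0 : VS N M))) = fun _ => F (win N M p) := by
    funext t; rw [smul_zero, add_zero]
  rw [this, deriv_const]

lemma win_sdecomp (N M : ℕ) (u : ℕ → ℝ) :
    win N M ((0:ℝ), (0:ℝ), (0 : ℤ → ℝ), u) =
      ∑ κ ∈ Finset.range M, u κ • win N M (sdir κ) := by
  unfold win sdir
  refine Prod.ext ?_ (Prod.ext ?_ (Prod.ext ?_ ?_))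
  · simp [Prod.fst_sum]
  · simp [Prod.fst_sum, Prod.snd_sum]
  · funext j
    simp [Prod.fst_sum, Prod.snd_sum, Finset.sum_apply]
  · funext k
    have hk : (k.1 : ℕ) ∈ Finset.range M := Finset.mem_range.2 k.2
    simp only [Prod.snd_sum, Prod.fst_sum, Finset.sum_apply, Pi.smul_apply,
      Prod.smul_mk, smul_eq_mul]
    rw [Finset.sum_congr rfl (fun κ _ => by rw [Pi.single_apply])]
    simp only [mul_ite, mul_one, mul_zero]
    rw [Finset.sum_ite_eq (Finset.range M) k.1 u, if_pos hk]

lemma AdmRep.gd_sum {f : KJet → ℝ} {N M : ℕ} {F : VS N M → ℝ}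
    (h : AdmRep f N M F) {p : KJet} (hp : Reg p) (u : ℕ → ℝ) :
    gd f p ((0:ℝ), (0:ℝ), (0 : ℤ → ℝ), u) =
      ∑ κ ∈ Finset.range M, u κ * gd f p (sdir κ) := by
  rw [h.gd_eq hp, win_sdecomp, map_sum]
  refine Finset.sum_congr rfl fun κ _ => ?_
  rw [map_smul, h.gd_eq hp (sdir κ)]
  rfl
/-! ### Closure of admissibility under Dy and Dz -/

lemma contDiff_emb_q (N M N' M' : ℕ) (ι : ℤ) :
    ContDiff ℝ (⊤ : ℕ∞) (fun x : VS N' M' => (emb N' M' x).2.2.1 ι) := by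
  by_cases h : (ι + N').toNat < 2 * N' + 1 ∧ -(N':ℤ) ≤ ι
  · have : (fun x : VS N' M' => (emb N' M' x).2.2.1 ι)
        = fun x => x.2.2.1 ⟨(ι + N').toNat, h.1⟩ := by
      funext x; exact dif_pos h
    rw [this]; fun_prop
  · have : (fun x : VS N' M' => (emb N' M' x).2.2.1 ι) = fun _ => 0 := by
      funext x; exact dif_neg h
    rw [this]; exact contDiff_const
lemma contDiff_emb_s (N M N' M' : ℕ) (κ : ℕ) :
    ContDiff ℝ (⊤ : ℕ∞) (fun x : VS N' M' => (emb N' M' x).2.2.2 κ) := by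
  by_cases h : κ < M'
  · have : (fun x : VS N' M' => (emb N' M' x).2.2.2 κ) = fun x => x.2.2.2 ⟨κ, h⟩ := by
      funext x; exact dif_pos h
    rw [this]; fun_prop
  · have : (fun x : VS N' M' => (emb N' M' x).2.2.2 κ) = fun _ => 0 := by
      funext x; exact dif_neg h
    rw [this]; exact contDiff_const

lemma contDiff_win_emb (N M N' M' : ℕ) :
    ContDiff ℝ (⊤ : ℕ∞) (fun x : VS N' M' => win N M (emb N' M' x)) := by
  unfold win
  refine ContDiff.prodMk (by fun_prop) (ContDiff.prodMk (by fun_prop)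
    (ContDiff.prodMk ?_ ?_))
  · exact contDiff_pi.2 fun j => contDiff_emb_q N M N' M' _
  · exact contDiff_pi.2 fun k => contDiff_emb_s N M N' M' _

lemma contDiff_win_vy_emb (N M N' M' : ℕ) :
    ContDiff ℝ (⊤ : ℕ∞) (fun x : VS N' M' => win N M (vy (emb N' M' x))) := by
  unfold win vy
  refine ContDiff.prodMk contDiff_const (ContDiff.prodMk contDiff_const (ContDiff.prodMk ?_ ?_))
  · exact contDiff_pi.2 fun j => contDiff_emb_q N M N' M' _
  · exact contDiff_pi.2 fun k => contDiff_emb_s N M N' M' _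

lemma mapsTo_win_emb (N M N' M' : ℕ) (hN : 2 ≤ N) :
    Set.MapsTo (fun x : VS N' M' => win N M (emb N' M' x)) (RegV N' M') (RegV N M) := by
  intro x hx
  show Reg (emb N M (win N M (emb N' M' x)))
  exact (Reg_emb_win N M hN _).2 hx

lemma win_emb_win (N M N' M' : ℕ) (hN : N ≤ N') (hM : M ≤ M') (p : KJet) :
    win N M (emb N' M' (win N' M' p)) = win N M p := by
  refine win_congr N M _ _ rfl rfl (fun ι h1 h2 => ?_) (fun κ h => ?_)
  · exact emb_win_q N' M' p ι (by omega) (by omega)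
  · exact emb_win_s N' M' p κ (by omega)

/-- Unconditional deriv formula for Dy. -/
lemma AdmRep.dy_formula {f : KJet → ℝ} {N M : ℕ} {F : VS N M → ℝ} (h : AdmRep f N M F)
    (q : KJet) :
    Dy f q = deriv (fun t : ℝ => F (win N M q + t • win N M (vy q))) 0 :=
  h.gd_eq_deriv q (vy q)

lemma AdmRep.dz_formula {f : KJet → ℝ} {N M : ℕ} {F : VS N M → ℝ} (h : AdmRep f N M F)
    (q : KJet) :
    Dz f q = deriv (fun t : ℝ => F (win N M q + t • win N M (vz q))) 0 :=
  h.gd_eq_deriv q (vz q)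

/-- Closure of admissibility under `Dy`. -/
lemma AdmRep.dy {f : KJet → ℝ} {N M : ℕ} {F : VS N M → ℝ} (h : AdmRep f N M F) :
    AdmRep (Dy f) (N+1) (M+1) (fun x => Dy f (emb (N+1) (M+1) x)) := by
  refine ⟨by have := h.1; omega, by have := h.2.1; omega, ?_, fun p => ?_⟩
  · -- smoothness
    have hder : ContDiffOn ℝ (⊤ : ℕ∞) (fderiv ℝ F) (RegV N M) :=
      h.2.2.1.fderiv_of_isOpen (isOpen_RegV N M) (by simp)
    have hA := contDiff_win_emb N M (N+1) (M+1)
    have hB := contDiff_win_vy_emb N M (N+1) (M+1)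
    have hcomp : ContDiffOn ℝ (⊤ : ℕ∞)
        (fun x : VS (N+1) (M+1) => fderiv ℝ F (win N M (emb (N+1) (M+1) x))
          (win N M (vy (emb (N+1) (M+1) x)))) (RegV (N+1) (M+1)) := by
      exact (hder.comp hA.contDiffOn (mapsTo_win_emb N M (N+1) (M+1) h.1)).clm_apply
        hB.contDiffOn
    refine hcomp.congr fun x hx => ?_
    show Dy f (emb (N+1) (M+1) x) = _
    rw [Dy_eq, h.gd_eq (p := emb (N+1) (M+1) x) hx (vy (emb (N+1) (M+1) x))]
  · -- correctness
    show Dy f p = Dy f (emb (N+1) (M+1) (win (N+1) (M+1) p))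
    rw [h.dy_formula p, h.dy_formula (emb (N+1) (M+1) (win (N+1) (M+1) p))]
    rw [win_emb_win N M (N+1) (M+1) (by omega) (by omega) p]
    have hv : win N M (vy (emb (N+1) (M+1) (win (N+1) (M+1) p))) = win N M (vy p) := by
      refine win_congr N M _ _ rfl rfl (fun ι h1 h2 => ?_) (fun κ hκ => ?_)
      · show (emb (N+1) (M+1) (win (N+1) (M+1) p)).2.2.1 (ι + 1) = p.2.2.1 (ι + 1)
        exact emb_win_q (N+1) (M+1) p (ι+1) (by omega) (by omega)
      · show (emb (N+1) (M+1) (win (N+1) (M+1) p)).2.2.2 (κ + 1) = p.2.2.2 (κ + 1)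
        exact emb_win_s (N+1) (M+1) p (κ+1) (by omega)
    rw [hv]
/-! ### Admissible representations for W κ and for Dz f -/

lemma K1_emb_win (N M : ℕ) (hN : 2 ≤ N) (p : KJet) :
    K1 (emb N M (win N M p)) = K1 p := by
  unfold K1
  rw [emb_win_q N M p (-2) (by omega) (by omega), emb_win_q N M p (-1) (by omega) (by omega),
    emb_win_q N M p 0 (by omega) (by omega)]

lemma K2_emb_win (N M : ℕ) (hN : 2 ≤ N) (p : KJet) :
    K2 (emb N M (win N M p)) = K2 p := by
  unfold K2
  rw [emb_win_q N M p 1 (by omega) (by omega), emb_win_q N M p (-1) (by omega) (by omega),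
    emb_win_q N M p 0 (by omega) (by omega)]

lemma contDiff_K1_emb (N M : ℕ) (hN : 2 ≤ N) :
    ContDiff ℝ (⊤ : ℕ∞) (fun x : VS N M => K1 (emb N M x)) := by
  unfold K1
  have h1 := contDiff_emb_q N M N M (-2)
  have h2 := contDiff_emb_q N M N M (-1)
  have h3 := contDiff_emb_q N M N M 0
  exact (h1.sub (contDiff_const.mul h2)).add h3

lemma contDiff_K2_emb (N M : ℕ) (hN : 2 ≤ N) :
    ContDiff ℝ (⊤ : ℕ∞) (fun x : VS N M => K2 (emb N M x)) := by
  unfold K2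
  have h1 := contDiff_emb_q N M N M 1
  have h2 := contDiff_emb_q N M N M (-1)
  have h3 := contDiff_emb_q N M N M 0
  exact (h1.add h2).sub (contDiff_const.mul h3)

lemma W_zero (p : KJet) : W 0 p = K1 p / K2 p * p.2.2.2 1 := rfl

lemma W_succ (κ : ℕ) (p : KJet) : W (κ+1) p = Dy (W κ) p := by
  unfold W
  rw [Function.iterate_succ_apply']

/-- Representation for `W 0 = (K¹/K²) s₁`. -/
lemma W0_rep : AdmRep (W 0) 2 2
    (fun x => K1 (emb 2 2 x) / K2 (emb 2 2 x) * (emb 2 2 x).2.2.2 1) := by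
  refine ⟨le_refl 2, by omega, ?_, fun p => ?_⟩
  · refine ContDiffOn.mul (ContDiffOn.div ((contDiff_K1_emb 2 2 le_rfl).contDiffOn)
      ((contDiff_K2_emb 2 2 le_rfl).contDiffOn) (fun x hx => hx.2)) ?_
    exact (contDiff_emb_s 2 2 2 2 1).contDiffOn
  · show W 0 p = K1 (emb 2 2 (win 2 2 p)) / K2 (emb 2 2 (win 2 2 p))
        * (emb 2 2 (win 2 2 p)).2.2.2 1
    rw [W_zero, K1_emb_win 2 2 le_rfl, K2_emb_win 2 2 le_rfl,
      emb_win_s 2 2 p 1 (by omega)]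

lemma W_rep : ∀ κ : ℕ, ∃ F : VS (κ+2) (κ+2) → ℝ, AdmRep (W κ) (κ+2) (κ+2) F := by
  intro κ
  induction κ with
  | zero => exact ⟨_, W0_rep⟩
  | succ n ih =>
    obtain ⟨F, hF⟩ := ih
    have heq : W (n+1) = Dy (W n) := funext (W_succ n)
    rw [heq]
    exact ⟨_, hF.dy⟩

lemma contDiffOn_win_vz_emb {N M : ℕ} (N' M' : ℕ) (hN' : 2 ≤ N') (hM : M + 1 ≤ M')
    (hMN' : M + 1 ≤ N') :
    ContDiffOn ℝ (⊤ : ℕ∞) (fun x : VS N' M' => win N M (vz (emb N' M' x))) (RegV N' M') := by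
  unfold win vz
  refine ContDiffOn.prodMk contDiffOn_const (ContDiffOn.prodMk contDiffOn_const
    (ContDiffOn.prodMk ?_ ?_))
  · exact contDiffOn_pi.2 fun j => (contDiff_emb_q N M N' M' _).contDiffOn
  · refine contDiffOn_pi.2 fun k => ?_
    -- component: x ↦ W k (emb N' M' x)
    obtain ⟨Fk, hFk⟩ := W_rep k.1
    have hk2 : k.1 + 2 ≤ N' := by have := k.2; omega
    have hk2' : k.1 + 2 ≤ M' := by have := k.2; omega
    have : ∀ x : VS N' M', W k.1 (emb N' M' x)
        = Fk (win (k.1+2) (k.1+2) (emb N' M' x)) := fun x => hFk.2.2.2 _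
    refine ContDiffOn.congr ?_ fun x hx => this x
    exact hFk.2.2.1.comp (contDiff_win_emb (k.1+2) (k.1+2) N' M').contDiffOn
      (mapsTo_win_emb (k.1+2) (k.1+2) N' M' (by omega))

lemma win_vz_emb_win {N M : ℕ} (N' M' : ℕ) (hN : N + 1 ≤ N') (hM : M + 1 ≤ M')
    (hMN' : M + 1 ≤ N') (p : KJet) :
    win N M (vz (emb N' M' (win N' M' p))) = win N M (vz p) := by
  refine win_congr N M _ _ rfl rfl (fun ι h1 h2 => ?_) (fun κ hκ => ?_)
  · show (emb N' M' (win N' M' p)).2.2.1 (ι - 1) = p.2.2.1 (ι - 1)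
    exact emb_win_q N' M' p (ι-1) (by omega) (by omega)
  · show W κ (emb N' M' (win N' M' p)) = W κ p
    obtain ⟨Fk, hFk⟩ := W_rep κ
    rw [hFk.2.2.2, hFk.2.2.2 p, win_emb_win (κ+2) (κ+2) N' M' (by omega) (by omega)]

/-- Closure of admissibility under `Dz`. -/
lemma AdmRep.dz {f : KJet → ℝ} {N M : ℕ} {F : VS N M → ℝ} (h : AdmRep f N M F) :
    AdmRep (Dz f) (N+M+2) (M+2) (fun x => Dz f (emb (N+M+2) (M+2) x)) := by
  refine ⟨by have := h.1; omega, by omega, ?_, fun p => ?_⟩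
  · have hder : ContDiffOn ℝ (⊤ : ℕ∞) (fderiv ℝ F) (RegV N M) :=
      h.2.2.1.fderiv_of_isOpen (isOpen_RegV N M) (by simp)
    have hA := contDiff_win_emb N M (N+M+2) (M+2)
    have hB := contDiffOn_win_vz_emb (N := N) (M := M) (N+M+2) (M+2)
      (by have := h.1; omega) (by omega) (by omega)
    have hcomp : ContDiffOn ℝ (⊤ : ℕ∞)
        (fun x : VS (N+M+2) (M+2) => fderiv ℝ F (win N M (emb (N+M+2) (M+2) x))
          (win N M (vz (emb (N+M+2) (M+2) x)))) (RegV (N+M+2) (M+2)) :=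
      (hder.comp hA.contDiffOn (mapsTo_win_emb N M (N+M+2) (M+2) h.1)).clm_apply hB
    refine hcomp.congr fun x hx => ?_
    show Dz f (emb (N+M+2) (M+2) x) = _
    rw [Dz_eq, h.gd_eq (p := emb (N+M+2) (M+2) x) hx (vz (emb (N+M+2) (M+2) x))]
  · show Dz f p = Dz f (emb (N+M+2) (M+2) (win (N+M+2) (M+2) p))
    rw [h.dz_formula p, h.dz_formula (emb (N+M+2) (M+2) (win (N+M+2) (M+2) p))]
    rw [win_emb_win N M (N+M+2) (M+2) (by omega) (by omega) p]
    rw [win_vz_emb_win (N+M+2) (M+2) (by omega) (by omega) (by omega) p]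
/-! ### Commutation of ∂/∂s_j with Dy and Dz -/

section helpers

variable {V : Type*} [NormedAddCommGroup V] [NormedSpace ℝ V]

lemma hasDerivAt_fderiv_apply (F : V → ℝ) {a : V} (hF : ContDiffAt ℝ (⊤ : ℕ∞) F a)
    (b : V) {w : ℝ → V} {w' : V} (hw : HasDerivAt w w' 0) :
    HasDerivAt (fun t : ℝ => fderiv ℝ F (a + t • b) (w t))
      (fderiv ℝ (fderiv ℝ F) a b (w 0) + fderiv ℝ F a w') 0 := by
  have h1 : ContDiffAt ℝ (⊤ : ℕ∞) (fderiv ℝ F) a := hF.fderiv_right (by simp)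
  have hfd : HasFDerivAt (fderiv ℝ F) (fderiv ℝ (fderiv ℝ F) a) a :=
    (h1.differentiableAt (by simp)).hasFDerivAt
  have hfd' : HasFDerivAt (fderiv ℝ F) (fderiv ℝ (fderiv ℝ F) a) (a + (0:ℝ) • b) := by
    simpa using hfd
  have h2 : HasDerivAt (fun t : ℝ => fderiv ℝ F (a + t • b)) (fderiv ℝ (fderiv ℝ F) a b) 0 :=
    hfd'.comp_hasDerivAt 0 (line_hasDerivAt a b 0)
  have h3 := h2.clm_apply hw
  simpa using h3

end helpers

lemma point_line_zero (p v : KJet) : p + (0:ℝ) • v = p := by simp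

/-- Key: derivative along a line of the partial ∂f/∂s_j. -/
lemma AdmRep.deriv_gd_line {f : KJet → ℝ} {N M : ℕ} {F : VS N M → ℝ} (h : AdmRep f N M F)
    {p : KJet} (hp : Reg p) (j : ℕ) (c : KJet) :
    deriv (fun t : ℝ => gd f (p + t • c) (sdir j)) 0
      = fderiv ℝ (fderiv ℝ F) (win N M p) (win N M c) (win N M (sdir j)) := by
  have hev : (fun t : ℝ => gd f (p + t • c) (sdir j)) =ᶠ[nhds 0]
      fun t : ℝ => fderiv ℝ F (win N M p + t • win N M c) (win N M (sdir j)) := by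
    filter_upwards [eventually_Reg_line p hp c] with t ht
    rw [h.gd_eq ht (sdir j), win_line]
  rw [hev.deriv_eq]
  have hF : ContDiffAt ℝ (⊤ : ℕ∞) F (win N M p) := h.diffAt (win_mem_RegV N M h.1 p hp)
  have := hasDerivAt_fderiv_apply F hF (win N M c)
    (hasDerivAt_const (0:ℝ) (win N M (sdir j)))
  simpa using this.deriv

lemma Dy_gd_eq {f : KJet → ℝ} {N M : ℕ} {F : VS N M → ℝ} (h : AdmRep f N M F)
    {p : KJet} (hp : Reg p) (j : ℕ) :
    Dy (fun q => gd f q (sdir j)) p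
      = fderiv ℝ (fderiv ℝ F) (win N M p) (win N M (vy p)) (win N M (sdir j)) :=
  h.deriv_gd_line hp j (vy p)

lemma Dz_gd_eq {f : KJet → ℝ} {N M : ℕ} {F : VS N M → ℝ} (h : AdmRep f N M F)
    {p : KJet} (hp : Reg p) (j : ℕ) :
    Dz (fun q => gd f q (sdir j)) p
      = fderiv ℝ (fderiv ℝ F) (win N M p) (win N M (vz p)) (win N M (sdir j)) :=
  h.deriv_gd_line hp j (vz p)

/-- Commutation relation (A): ∂/∂s_j of Dy f. -/
lemma gd_Dy_sdir {f : KJet → ℝ} {N M : ℕ} {F : VS N M → ℝ} (h : AdmRep f N M F)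
    {p : KJet} (hp : Reg p) (j : ℕ) :
    gd (Dy f) p (sdir j)
      = Dy (fun q => gd f q (sdir j)) p + gd f p (Ly (sdir j)) := by
  have hF : ContDiffAt ℝ (⊤ : ℕ∞) F (win N M p) := h.diffAt (win_mem_RegV N M h.1 p hp)
  have hsymm : IsSymmSndFDerivAt ℝ F (win N M p) := hF.isSymmSndFDerivAt (by rw [minSmoothness_of_isRCLikeNormedField]; exact WithTop.coe_le_coe.2 le_top)
  -- LHS as a deriv of fderiv along the line
  have hfun : (fun t : ℝ => Dy f (p + t • sdir j))
      = fun t : ℝ => fderiv ℝ F (win N M p + t • win N M (sdir j))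
          (win N M (vy p) + t • win N M (Ly (sdir j))) := by
    funext t
    rw [Dy_eq, h.gd_eq ((Reg_line_sdir p t j).2 hp) (vy (p + t • sdir j)), win_line,
      vy_line p (sdir j) t, win_line]
  have hw : HasDerivAt (fun t : ℝ => win N M (vy p) + t • win N M (Ly (sdir j)))
      (win N M (Ly (sdir j))) 0 := line_hasDerivAt _ _ 0
  have hL := hasDerivAt_fderiv_apply F hF (win N M (sdir j)) hw
  have hLHS : gd (Dy f) p (sdir j)
      = fderiv ℝ (fderiv ℝ F) (win N M p) (win N M (sdir j)) (win N M (vy p))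
        + fderiv ℝ F (win N M p) (win N M (Ly (sdir j))) := by
    unfold gd
    rw [hfun]
    have := hL.deriv
    simpa using this
  rw [hLHS, Dy_gd_eq h hp j, h.gd_eq hp (Ly (sdir j)), hsymm (win N M (sdir j)) (win N M (vy p))]

lemma sdir_line_q (p : KJet) (t : ℝ) (j : ℕ) (ι : ℤ) :
    (p + t • sdir j).2.2.1 ι = p.2.2.1 ι := by
  show p.2.2.1 ι + t * (0:ℤ→ℝ) ι = p.2.2.1 ι
  simp

lemma hasDerivAt_W_line (κ : ℕ) {p : KJet} (hp : Reg p) (j : ℕ) :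
    HasDerivAt (fun t : ℝ => W κ (p + t • sdir j)) (gd (W κ) p (sdir j)) 0 := by
  obtain ⟨Fk, hFk⟩ := W_rep κ
  have hfun : (fun t : ℝ => W κ (p + t • sdir j))
      = fun t => Fk (win (κ+2) (κ+2) p + t • win (κ+2) (κ+2) (sdir j)) := by
    funext t; rw [hFk.2.2.2, win_line]
  have hd : DifferentiableAt ℝ Fk (win (κ+2) (κ+2) p) :=
    (hFk.diffAt (win_mem_RegV (κ+2) (κ+2) hFk.1 p hp)).differentiableAt (by simp)
  have hFd : HasFDerivAt Fk (fderiv ℝ Fk (win (κ+2) (κ+2) p))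
      (win (κ+2) (κ+2) p + (0:ℝ) • win (κ+2) (κ+2) (sdir j)) := by
    simpa using hd.hasFDerivAt
  have hline := line_hasDerivAt (win (κ+2) (κ+2) p) (win (κ+2) (κ+2) (sdir j)) 0
  have := hFd.comp_hasDerivAt 0 hline
  rw [hFk.gd_eq hp (sdir j), hfun]
  exact this

/-- The derivative at 0 of `t ↦ win (vz (p + t • sdir j))`. -/
lemma hasDerivAt_win_vz_line (N M : ℕ) {p : KJet} (hp : Reg p) (j : ℕ) :
    HasDerivAt (fun t : ℝ => win N M (vz (p + t • sdir j)))
      (win N M ((0:ℝ), (0:ℝ), (0:ℤ→ℝ), fun κ => gd (W κ) p (sdir j))) 0 := by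
  have hfun : (fun t : ℝ => win N M (vz (p + t • sdir j)))
      = fun t : ℝ => ((0:ℝ), (1:ℝ), (fun i : Fin (2*N+1) => p.2.2.1 ((i.1:ℤ) - N - 1)),
          fun k : Fin M => W k.1 (p + t • sdir j)) := by
    funext t
    unfold win vz
    refine Prod.ext rfl (Prod.ext rfl (Prod.ext ?_ rfl))
    funext i
    show (p + t • sdir j).2.2.1 ((i.1:ℤ) - N - 1) = _
    rw [sdir_line_q]
  rw [hfun]
  have hval : win N M ((0:ℝ), (0:ℝ), (0:ℤ→ℝ), fun κ => gd (W κ) p (sdir j))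
      = ((0:ℝ), (0:ℝ), (0 : Fin (2*N+1) → ℝ), fun k : Fin M => gd (W k.1) p (sdir j)) := by
    unfold win
    refine Prod.ext rfl (Prod.ext rfl (Prod.ext ?_ rfl))
    funext i
    rfl
  rw [hval]
  refine HasDerivAt.prodMk (hasDerivAt_const 0 _) ?_
  refine HasDerivAt.prodMk (hasDerivAt_const 0 _) ?_
  refine HasDerivAt.prodMk (hasDerivAt_const 0 _) ?_
  exact hasDerivAt_pi.2 fun k => hasDerivAt_W_line k.1 hp j

/-- Commutation relation (B): ∂/∂s_j of Dz f. -/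
lemma gd_Dz_sdir {f : KJet → ℝ} {N M : ℕ} {F : VS N M → ℝ} (h : AdmRep f N M F)
    {p : KJet} (hp : Reg p) (j : ℕ) :
    gd (Dz f) p (sdir j)
      = Dz (fun q => gd f q (sdir j)) p
        + gd f p ((0:ℝ), (0:ℝ), (0:ℤ→ℝ), fun κ => gd (W κ) p (sdir j)) := by
  have hF : ContDiffAt ℝ (⊤ : ℕ∞) F (win N M p) := h.diffAt (win_mem_RegV N M h.1 p hp)
  have hsymm : IsSymmSndFDerivAt ℝ F (win N M p) := hF.isSymmSndFDerivAt (by rw [minSmoothness_of_isRCLikeNormedField]; exact WithTop.coe_le_coe.2 le_top)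
  have hfun : (fun t : ℝ => Dz f (p + t • sdir j))
      = fun t : ℝ => fderiv ℝ F (win N M p + t • win N M (sdir j))
          (win N M (vz (p + t • sdir j))) := by
    funext t
    rw [Dz_eq, h.gd_eq ((Reg_line_sdir p t j).2 hp) (vz (p + t • sdir j)), win_line]
  have hw := hasDerivAt_win_vz_line N M hp j
  have hL := hasDerivAt_fderiv_apply F hF (win N M (sdir j)) hw
  have hw0 : win N M (vz (p + (0:ℝ) • sdir j)) = win N M (vz p) := by
    rw [point_line_zero]
  have hLHS : gd (Dz f) p (sdir j)
      = fderiv ℝ (fderiv ℝ F) (win N M p) (win N M (sdir j)) (win N M (vz p))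
        + fderiv ℝ F (win N M p)
            (win N M ((0:ℝ), (0:ℝ), (0:ℤ→ℝ), fun κ => gd (W κ) p (sdir j))) := by
    unfold gd
    rw [hfun]
    have := hL.deriv
    rw [hw0] at this
    exact this
  rw [hLHS, Dz_gd_eq h hp j, h.gd_eq hp ((0:ℝ), (0:ℝ), (0:ℤ→ℝ), fun κ => gd (W κ) p (sdir j)),
    hsymm (win N M (sdir j)) (win N M (vz p))]
/-! ### Derivatives of W κ in the s-directions -/

lemma W0_gd (p : KJet) (j : ℕ) :
    gd (W 0) p (sdir j) = K1 p / K2 p * (Pi.single j 1 : ℕ → ℝ) 1 := by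
  unfold gd
  have hfe : (fun t : ℝ => W 0 (p + t • sdir j))
      = fun t : ℝ => (K1 p / K2 p) * (p.2.2.2 1 + t * (Pi.single j 1 : ℕ → ℝ) 1) := by
    funext t
    rw [W_zero, K1_line_sdir p t _ rfl, K2_line_sdir p t _ rfl]
    rfl
  rw [hfe]
  have h1 : HasDerivAt (fun t : ℝ => p.2.2.2 1 + t * (Pi.single j 1 : ℕ → ℝ) 1)
      ((Pi.single j 1 : ℕ → ℝ) 1) 0 := by
    simpa using line_hasDerivAt (p.2.2.2 1) ((Pi.single j 1 : ℕ → ℝ) 1) 0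
  exact (h1.const_mul (K1 p / K2 p)).deriv

lemma W_facts : ∀ κ : ℕ,
    (∀ p, Reg p → ∀ j, κ + 2 ≤ j → gd (W κ) p (sdir j) = 0) ∧
    (∀ p, Reg p → gd (W κ) p (sdir (κ+1)) = K1 p / K2 p) := by
  intro κ
  induction κ with
  | zero =>
    constructor
    · intro p hp j hj
      rw [W0_gd, Pi.single_apply, if_neg (by omega), mul_zero]
    · intro p hp
      rw [W0_gd, Pi.single_apply, if_pos rfl, mul_one]
  | succ n ih =>
    obtain ⟨Fn, hFn⟩ := W_rep n
    have hW : ∀ p, gd (W (n+1)) p = gd (Dy (W n)) p := by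
      intro p; rw [funext (W_succ n)]
    constructor
    · intro p hp j hj
      rw [hW p, gd_Dy_sdir hFn hp j]
      obtain ⟨i, rfl⟩ : ∃ i, j = i + 1 := ⟨j - 1, by omega⟩
      rw [Ly_sdir_succ i]
      have t1 : Dy (fun q => gd (W n) q (sdir (i+1))) p = 0 :=
        Dy_zero_on _ (fun q hq => ih.1 q hq (i+1) (by omega)) p hp
      have t2 : gd (W n) p (sdir i) = 0 := ih.1 p hp i (by omega)
      rw [t1, t2, add_zero]
    · intro p hp
      rw [hW p, gd_Dy_sdir hFn hp (n+2)]
      rw [show n+2 = (n+1)+1 from rfl, Ly_sdir_succ (n+1)]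
      have t1 : Dy (fun q => gd (W n) q (sdir (n+1+1))) p = 0 :=
        Dy_zero_on _ (fun q hq => ih.1 q hq (n+2) (by omega)) p hp
      rw [t1, ih.2 p hp, zero_add]
theorem q_component_independent_of_s
    (χ θ : KJet → ℝ) (hχ : IsDiffFunQS χ) (hθ : IsDiffFunQS θ)
    (h1 : ∀ p : KJet, Reg p → Dy (Dz χ) p = χ p)
    (h2 : ∀ p : KJet, Reg p →
      p.2.2.2 1 * (Dz (Dz χ) p - 2 * Dz χ p + χ p) + K1 p * Dy θ p
        = K1 p / K2 p * p.2.2.2 1 * (Dy χ p + Dz χ p - 2 * χ p)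
          + K2 p * Dz θ p) :
    ∀ (κ : ℕ) (p : KJet), Reg p →
      gd χ p (0, 0, 0, Pi.single κ (1 : ℝ)) = 0 := by
  classical
  -- an admissible representation for χ
  obtain ⟨N0, M0, F0, hF0, hrep0⟩ := hχ
  set N1 := N0 + 2 with hN1
  set M1 := M0 + 1 with hM1
  have hrepχ : AdmRep χ N1 M1 (fun x => F0 (win N0 M0 (emb N1 M1 x))) := by
    refine ⟨by omega, by omega, ?_, fun p => ?_⟩
    · exact (hF0.comp (contDiff_win_emb N0 M0 N1 M1)).contDiffOn
    · show χ p = F0 (win N0 M0 (emb N1 M1 (win N1 M1 p)))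
      rw [win_emb_win N0 M0 N1 M1 (by omega) (by omega) p, hrep0 p]
      rfl
  have hrepDz := hrepχ.dz
  -- the downward induction
  have key : ∀ d j (p : KJet), Reg p → M1 ≤ j + d → gd χ p (sdir j) = 0 := by
    intro d
    induction d with
    | zero => exact fun j p hp hj => hrepχ.gd_out p j (by omega)
    | succ d ih =>
      intro j p hp hj
      by_cases hge : M1 ≤ j + d
      · exact ih j p hp hge
      have hjM : j < M1 := by omega
      have hIH : ∀ j', j + 1 ≤ j' → ∀ q, Reg q → gd χ q (sdir j') = 0 :=
        fun j' hj' q hq => ih j' q hq (by omega)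
      -- ∂/∂s_{j+2} of Dz χ vanishes on Reg
      have step1 : ∀ q, Reg q → gd (Dz χ) q (sdir (j+2)) = 0 := by
        intro q hq
        rw [gd_Dz_sdir hrepχ hq (j+2)]
        have t1 : Dz (fun r => gd χ r (sdir (j+2))) q = 0 :=
          Dz_zero_on _ (fun r hr => hIH (j+2) (by omega) r hr) q hq
        have t2 : gd χ q ((0:ℝ), (0:ℝ), (0:ℤ→ℝ), fun κ => gd (W κ) q (sdir (j+2))) = 0 := by
          rw [hrepχ.gd_sum hq]
          refine Finset.sum_eq_zero fun κ hκ => ?_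
          by_cases hκj : κ ≤ j
          · rw [(W_facts κ).1 q hq (j+2) (by omega), zero_mul]
          · rw [hIH κ (by omega) q hq, mul_zero]
        rw [t1, t2, add_zero]
      -- ∂/∂s_{j+1} of Dz χ equals (K¹/K²) ∂χ/∂s_j on Reg
      have step2 : gd (Dz χ) p (sdir (j+1)) = K1 p / K2 p * gd χ p (sdir j) := by
        rw [gd_Dz_sdir hrepχ hp (j+1)]
        have t1 : Dz (fun r => gd χ r (sdir (j+1))) p = 0 :=
          Dz_zero_on _ (fun r hr => hIH (j+1) le_rfl r hr) p hp
        have t2 : gd χ p ((0:ℝ), (0:ℝ), (0:ℤ→ℝ), fun κ => gd (W κ) p (sdir (j+1)))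
            = K1 p / K2 p * gd χ p (sdir j) := by
          rw [hrepχ.gd_sum hp]
          rw [Finset.sum_eq_single j]
          · rw [(W_facts j).2 p hp]
          · intro κ hκ hne
            rcases lt_or_gt_of_ne hne with hlt | hgt
            · rw [(W_facts κ).1 p hp (j+1) (by omega), zero_mul]
            · rw [hIH κ (by omega) p hp, mul_zero]
          · intro hnot
            exact absurd (Finset.mem_range.2 hjM) hnot
        rw [t1, t2, zero_add]
      -- transfer through the symmetry equation
      have step3 : gd (Dy (Dz χ)) p (sdir (j+2)) = 0 := by
        rw [gd_congr_on (Dy (Dz χ)) χ h1 p hp (j+2)]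
        exact hIH (j+2) (by omega) p hp
      have step4 : gd (Dy (Dz χ)) p (sdir (j+2))
          = K1 p / K2 p * gd χ p (sdir j) := by
        rw [gd_Dy_sdir hrepDz hp (j+2)]
        have t1 : Dy (fun q => gd (Dz χ) q (sdir (j+2))) p = 0 :=
          Dy_zero_on _ step1 p hp
        rw [t1, show j+2 = (j+1)+1 from rfl, Ly_sdir_succ (j+1), step2, zero_add]
      have hK : K1 p / K2 p ≠ 0 := div_ne_zero hp.1 hp.2
      have := step4.symm.trans step3
      rcases mul_eq_zero.mp this with h | h
      · exact absurd h hK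
      · exact h
  intro κ p hp
  exact key M1 κ p hp (by omega)

end KG

end
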